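/- arXiv:2405.04350 — 3 statements merged into one kernel-verified Lean document; each statement's English description precedes it below -/
import Mathlib

section
/- Strong duality for the decision-dependent distributionally robust second level: if the ambiguity set P(μ) is nonempty, then there exist q* ∈ P(μ) and a dual feasible point (ψ⁺*, ψ⁻*, φ*) such that Σ_{a∈𝒜} q* a · H a = Σ_{l∈L} ψ⁺* l · μ l + φ*; moreover q* maximizes Σ_{a∈𝒜} q a · H a over all q ∈ P(μ), and (ψ⁺*, ψ⁻*, φ*) minimizes the dual objective value over all dual feasible points. -/
/-!
The ambiguity set `P(μ)` is a polytope of pmfs on `𝒜`, so the second level is a linear program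
over the probability simplex with the extra constraints `Σ q a (1 - a l) ≤ μ l`. Compactness gives
a primal optimum `q*`. Farkas' lemma (a finitely generated cone is closed by conic Carathéodory,
so a point outside it is separated by a hyperplane) turns optimality of `q*` into a dual point
`(ψ⁺, 0, φ)` of the same value, and weak duality, which discards `ψ⁻` because `1 - a l ≥ 0`,
shows that both points are optimal.
-/

open Finset Matrix

section ConicalCombination

variable {ι E : Type*} [AddCommGroup E] [Module ℝ E] {v : ι → E}

lemma exists_sum_erase_smul_eq_of_sum_smul_eq_zero [DecidableEq ι] {s : Finset ι} {c g : ι → ℝ}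
    (hc : ∀ i ∈ s, 0 ≤ c i) (hg : ∑ i ∈ s, g i • v i = 0) (hpos : ∃ i ∈ s, 0 < g i) :
    ∃ j ∈ s, ∃ d : ι → ℝ, (∀ i ∈ s.erase j, 0 ≤ d i) ∧
      ∑ i ∈ s.erase j, d i • v i = ∑ i ∈ s, c i • v i := by
  -- `r = min {c i / g i | g i > 0}` is the largest multiple of `g` that keeps `c - r • g ≥ 0`
  obtain ⟨j, hj, hmin⟩ := (s.filter (0 < g ·)).exists_min_image (fun i => c i / g i)
    (by simpa [Finset.Nonempty] using hpos)
  rw [mem_filter] at hj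
  set r := c j / g j
  have hr : 0 ≤ r := div_nonneg (hc j hj.1) hj.2.le
  refine ⟨j, hj.1, fun i => c i - r * g i, fun i hi => ?_, ?_⟩
  · have hi := mem_of_mem_erase hi
    rcases le_or_gt (g i) 0 with hgi | hgi
    · nlinarith [hc i hi]
    · have := hmin i (mem_filter.2 ⟨hi, hgi⟩)
      rw [le_div_iff₀ hgi] at this
      linarith
  · have hdj : c j - r * g j = 0 := by simp [r, div_mul_cancel₀ _ hj.2.ne']
    rw [sum_erase _ (by simp only [hdj, zero_smul])]
    simp only [sub_smul, sum_sub_distrib, mul_smul, ← smul_sum, hg, smul_zero, sub_zero]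

variable (v) in
theorem exists_linearIndepOn_sum_smul_eq (s : Finset ι) (c : ι → ℝ) (hc : ∀ i ∈ s, 0 ≤ c i) :
    ∃ t ⊆ s, LinearIndepOn ℝ v (t : Set ι) ∧
      ∃ d : ι → ℝ, (∀ i ∈ t, 0 ≤ d i) ∧ ∑ i ∈ t, d i • v i = ∑ i ∈ s, c i • v i := by
  classical
  induction s using Finset.strongInduction generalizing c with
  | H s ih =>
  by_cases hs : LinearIndepOn ℝ v (s : Set ι)
  · exact ⟨s, subset_rfl, hs, c, hc, rfl⟩
  obtain ⟨g, hg, i, hi, hgi⟩ := not_linearIndepOn_finset_iff.1 hs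
  obtain ⟨g, hg, hpos⟩ : ∃ g : ι → ℝ, ∑ i ∈ s, g i • v i = 0 ∧ ∃ i ∈ s, 0 < g i := by
    rcases hgi.lt_or_gt with h | h
    · exact ⟨-g, by simp [neg_smul, hg], i, hi, by simpa using h⟩
    · exact ⟨g, hg, i, hi, h⟩
  obtain ⟨j, hj, d, hd, hsum⟩ := exists_sum_erase_smul_eq_of_sum_smul_eq_zero hc hg hpos
  obtain ⟨t, hts, ht, e, he, hsum'⟩ := ih _ (erase_ssubset hj) d hd
  exact ⟨t, hts.trans (erase_subset _ _), ht, e, he, hsum'.trans hsum⟩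

namespace PointedCone

lemma mem_hull_range_iff [Fintype ι] {x : E} :
    x ∈ hull ℝ (Set.range v) ↔ ∃ c : ι → ℝ, 0 ≤ c ∧ ∑ i, c i • v i = x := by
  rw [Submodule.mem_span_range_iff_exists_fun]
  constructor
  · rintro ⟨c, rfl⟩
    exact ⟨fun i => c i, fun i => (c i).2, rfl⟩
  · rintro ⟨c, hc, rfl⟩
    exact ⟨fun i => ⟨c i, hc i⟩, rfl⟩

variable [TopologicalSpace E] [IsTopologicalAddGroup E] [ContinuousSMul ℝ E] [T2Space E]

lemma isClosed_hull_range_of_linearIndependent [Fintype ι] (hv : LinearIndependent ℝ v) :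
    IsClosed (hull ℝ (Set.range v) : Set E) := by
  have hhull : (hull ℝ (Set.range v) : Set E) = Fintype.linearCombination ℝ v '' Set.Ici 0 := by
    ext x
    simp [mem_hull_range_iff, Fintype.linearCombination_apply]
  rw [hhull]
  exact (LinearMap.isClosedEmbedding_of_injective (LinearMap.ker_eq_bot.2
    (linearIndependent_iff_injective_fintypeLinearCombination.1 hv))).isClosedMap _ isClosed_Ici

variable (v) in
theorem isClosed_hull_range [Finite ι] : IsClosed (hull ℝ (Set.range v) : Set E) := by
  classical
  cases nonempty_fintype ι
  have hunion : (hull ℝ (Set.range v) : Set E) =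
      ⋃ t ∈ {t : Finset ι | LinearIndepOn ℝ v (t : Set ι)}, hull ℝ (Set.range fun i : t => v i) := by
    refine subset_antisymm (fun x hx => ?_) (Set.iUnion₂_subset fun t _ =>
      Submodule.span_mono (Set.range_comp_subset_range _ v))
    obtain ⟨c, hc, rfl⟩ := mem_hull_range_iff.1 hx
    obtain ⟨t, -, ht, d, hd, hsum⟩ := exists_linearIndepOn_sum_smul_eq v univ c fun i _ => hc i
    refine Set.mem_biUnion ht (mem_hull_range_iff.2 ⟨fun i => d i, fun i => hd i i.2, ?_⟩)
    rw [sum_coe_sort t fun i => d i • v i, hsum]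
  rw [hunion]
  exact (Set.toFinite _).isClosed_biUnion fun t ht => isClosed_hull_range_of_linearIndependent ht

end PointedCone

end ConicalCombination

namespace Matrix

variable {m n : Type*} [Fintype m] [Fintype n]

theorem exists_nonneg_mulVec_eq_or_exists_vecMul_nonneg (N : Matrix m n ℝ) (d : m → ℝ) :
    (∃ y, 0 ≤ y ∧ N *ᵥ y = d) ∨ ∃ x, 0 ≤ x ᵥ* N ∧ x ⬝ᵥ d < 0 := by
  classical
  by_cases hd : d ∈ PointedCone.hull ℝ (Set.range Nᵀ)
  · obtain ⟨y, hy, hyd⟩ := PointedCone.mem_hull_range_iff.1 hd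
    exact .inl ⟨y, hy, by rw [← vecMul_transpose, vecMul_eq_sum, hyd]⟩
  obtain ⟨f, hf, hfd⟩ :=
    ProperCone.hyperplane_separation_point ⟨_, PointedCone.isClosed_hull_range Nᵀ⟩ hd
  set x : m → ℝ := fun i => f fun j => if i = j then 1 else 0
  have hfx (u : m → ℝ) : f u = x ⬝ᵥ u := by
    rw [dotProduct_comm]
    exact LinearMap.pi_apply_eq_sum_univ (f : (m → ℝ) →ₗ[ℝ] ℝ) u
  refine .inr ⟨x, fun j => ?_, by rwa [← hfx]⟩
  have hxj := hf (Nᵀ j) (PointedCone.subset_hull ⟨j, rfl⟩)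
  rwa [hfx] at hxj

theorem exists_nonneg_le_mulVec_or_exists_vecMul_nonpos (N : Matrix m n ℝ) (d : m → ℝ) :
    (∃ y, 0 ≤ y ∧ d ≤ N *ᵥ y) ∨ ∃ x, 0 ≤ x ∧ x ᵥ* N ≤ 0 ∧ 0 < x ⬝ᵥ d := by
  classical
  -- the columns of `-1` are slack variables
  rcases (fromCols N (-1 : Matrix m m ℝ)).exists_nonneg_mulVec_eq_or_exists_vecMul_nonneg d with
    ⟨y, hy, rfl⟩ | ⟨x, hx, hxd⟩
  · refine .inl ⟨y ∘ Sum.inl, fun j => hy _, fun i => ?_⟩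
    simpa [neg_mulVec] using hy (Sum.inr i)
  · refine .inr ⟨-x, fun i => ?_, fun j => ?_, by simpa using hxd⟩
    · simpa [vecMul_neg] using hx (Sum.inr i)
    · simpa [neg_vecMul] using hx (Sum.inl j)

end Matrix

section MomentProblem

variable {n m : Type*} [Fintype n]

def momentPolytope (M : Matrix n m ℝ) (b : m → ℝ) : Set (n → ℝ) :=
  {x ∈ stdSimplex ℝ n | x ᵥ* M ≤ b}

variable {M : Matrix n m ℝ} {b : m → ℝ} (c : n → ℝ)

theorem dotProduct_le_of_mem_momentPolytope [Fintype m] {x : n → ℝ} (hx : x ∈ momentPolytope M b)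
    {y : m → ℝ} {φ : ℝ} (hy : 0 ≤ y) (hyc : ∀ i, c i ≤ (M *ᵥ y) i + φ) :
    x ⬝ᵥ c ≤ y ⬝ᵥ b + φ := by
  obtain ⟨⟨hx0, hx1⟩, hxM⟩ := hx
  calc x ⬝ᵥ c ≤ x ⬝ᵥ (M *ᵥ y + fun _ => φ) := dotProduct_le_dotProduct_of_nonneg_left hyc hx0
    _ = (x ᵥ* M) ⬝ᵥ y + φ := by
      rw [dotProduct_add, dotProduct_mulVec]
      simp [dotProduct, ← sum_mul, hx1]
    _ ≤ y ⬝ᵥ b + φ := by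
      rw [dotProduct_comm y]
      gcongr
      exact dotProduct_le_dotProduct_of_nonneg_right hxM hy

theorem exists_isMaxOn_momentPolytope (hne : (momentPolytope M b).Nonempty) :
    ∃ x ∈ momentPolytope M b, IsMaxOn (· ⬝ᵥ c) (momentPolytope M b) x :=
  ((isCompact_stdSimplex ℝ n).inter_right
    (isClosed_le (continuous_id.matrix_vecMul continuous_const) continuous_const)).exists_isMaxOn
    hne (continuous_id.dotProduct continuous_const).continuousOn

theorem exists_dual_eq_of_isMaxOn [Fintype m] {x : n → ℝ} (hx : x ∈ momentPolytope M b)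
    (hmax : IsMaxOn (· ⬝ᵥ c) (momentPolytope M b) x) :
    ∃ (y : m → ℝ) (φ : ℝ), 0 ≤ y ∧ (∀ i, c i ≤ (M *ᵥ y) i + φ) ∧ y ⬝ᵥ b + φ = x ⬝ᵥ c := by
  set p := x ⬝ᵥ c
  -- eliminating the free multiplier of `∑ x = 1` through `φ = p - y ⬝ᵥ b` leaves a Farkas system
  rcases (M - replicateRow n b).exists_nonneg_le_mulVec_or_exists_vecMul_nonpos (fun i => c i - p)
    with ⟨y, hy, hyc⟩ | ⟨z, hz, hzM, hzc⟩
  · refine ⟨y, p - y ⬝ᵥ b, hy, fun i => ?_, by ring⟩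
    have hyci := hyc i
    simp only [sub_mulVec, replicateRow_mulVec_eq_const, Pi.sub_apply, Function.const_apply,
      dotProduct_comm b] at hyci
    linarith
  exfalso
  obtain ⟨⟨hx0, hx1⟩, hxM⟩ := hx
  have hs : 0 ≤ ∑ i, z i := sum_nonneg fun i _ => hz i
  have hzM (j : m) : (z ᵥ* M) j ≤ (∑ i, z i) * b j := by
    simpa [vecMul, dotProduct, replicateRow, mul_sub, sum_mul] using hzM j
  have hzc : (∑ i, z i) * p < z ⬝ᵥ c := by
    simpa [dotProduct, mul_sub, sum_sub_distrib, sum_mul] using hzc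
  -- mixing `x` with the Farkas certificate `z` stays feasible and beats the optimum
  have hw : (1 + ∑ i, z i)⁻¹ • (x + z) ∈ momentPolytope M b := by
    refine ⟨⟨fun i => ?_, ?_⟩, fun j => ?_⟩
    · exact mul_nonneg (by positivity) (add_nonneg (hx0 i) (hz i))
    · simp only [Pi.smul_apply, Pi.add_apply, smul_eq_mul, ← mul_sum, sum_add_distrib, hx1]
      exact inv_mul_cancel₀ (by positivity)
    · simp only [smul_vecMul, add_vecMul, Pi.smul_apply, Pi.add_apply, smul_eq_mul]
      rw [← div_eq_inv_mul, div_le_iff₀ (by positivity)]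
      linarith [hxM j, hzM j]
  have hwc := hmax hw
  simp only [Set.mem_ofPred_eq, smul_dotProduct, add_dotProduct, smul_eq_mul] at hwc
  rw [← div_eq_inv_mul, div_le_iff₀ (by positivity)] at hwc
  linarith

end MomentProblem

section Contingency

variable {L : Type*} (𝒜 : Finset (L → ℝ))

def failureMatrix : Matrix 𝒜 L ℝ := Matrix.of fun a l => 1 - (a : L → ℝ) l

variable {𝒜}

lemma comp_val_mem_momentPolytope_failureMatrix_iff {μ : L → ℝ} {q : (L → ℝ) → ℝ} :
    q ∘ Subtype.val ∈ momentPolytope (failureMatrix 𝒜) μ ↔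
      (∀ a ∈ 𝒜, 0 ≤ q a) ∧ (∑ a ∈ 𝒜, q a = 1) ∧ ∀ l, ∑ a ∈ 𝒜, q a * (1 - a l) ≤ μ l := by
  simp only [momentPolytope, stdSimplex, Set.mem_ofPred_eq, Pi.le_def, vecMul, dotProduct,
    failureMatrix, of_apply, Function.comp_apply, Subtype.forall, sum_coe_sort, and_assoc]
  refine and_congr_right' (and_congr_right' (forall_congr' fun l => ?_))
  rw [sum_coe_sort 𝒜 (fun a => q a * (1 - a l))]

lemma failureMatrix_mulVec_apply [Fintype L] (ψ : L → ℝ) (a : 𝒜) :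
    (failureMatrix 𝒜 *ᵥ ψ) a = ∑ l, ψ l * (1 - (a : L → ℝ) l) := by
  simp [failureMatrix, mulVec, dotProduct, mul_comm]

lemma le_failureMatrix_mulVec_add [Fintype L] {H : (L → ℝ) → ℝ} {ψp ψm : L → ℝ} {φ : ℝ}
    (h𝒜 : ∀ a ∈ 𝒜, ∀ l, a l ≤ 1) (hψm : ∀ l, 0 ≤ ψm l)
    (hH : ∀ a ∈ 𝒜, ∑ l, (ψp l - ψm l) * (1 - a l) + φ ≥ H a) (a : 𝒜) :
    H a ≤ (failureMatrix 𝒜 *ᵥ ψp) a + φ := by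
  rw [failureMatrix_mulVec_apply]
  refine (hH a a.2).trans (add_le_add_left (sum_le_sum fun l _ => ?_) φ)
  nlinarith [hψm l, h𝒜 a a.2 l]

end Contingency

theorem strong_duality_ddu_second_level_general
    {L : Type*} [Fintype L]
    (𝒜 : Finset (L → ℝ))
    (hbin : ∀ a ∈ 𝒜, ∀ l : L, a l = 0 ∨ a l = 1)
    (μ : L → ℝ) (H : (L → ℝ) → ℝ)
    -- the ambiguity set P(μ) is nonempty
    (hne : ∃ q : (L → ℝ) → ℝ,
      (∀ a ∈ 𝒜, 0 ≤ q a) ∧ (∑ a ∈ 𝒜, q a = 1) ∧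
      (∀ l : L, ∑ a ∈ 𝒜, q a * (1 - a l) ≤ μ l)) :
    ∃ (qs : (L → ℝ) → ℝ) (ψps ψms : L → ℝ) (φs : ℝ),
      -- qs ∈ P(μ)
      ((∀ a ∈ 𝒜, 0 ≤ qs a) ∧ (∑ a ∈ 𝒜, qs a = 1) ∧
        (∀ l : L, ∑ a ∈ 𝒜, qs a * (1 - a l) ≤ μ l)) ∧
      -- (ψps, ψms, φs) is dual feasible
      ((∀ l : L, 0 ≤ ψps l) ∧ (∀ l : L, 0 ≤ ψms l) ∧
        (∀ a ∈ 𝒜, ∑ l : L, (ψps l - ψms l) * (1 - a l) + φs ≥ H a)) ∧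
      -- equal objective values
      (∑ a ∈ 𝒜, qs a * H a = ∑ l : L, ψps l * μ l + φs) ∧
      -- qs is primal optimal
      (∀ q : (L → ℝ) → ℝ,
        (∀ a ∈ 𝒜, 0 ≤ q a) → (∑ a ∈ 𝒜, q a = 1) →
        (∀ l : L, ∑ a ∈ 𝒜, q a * (1 - a l) ≤ μ l) →
        ∑ a ∈ 𝒜, q a * H a ≤ ∑ a ∈ 𝒜, qs a * H a) ∧
      -- (ψps, ψms, φs) is dual optimal
      (∀ (ψp ψm : L → ℝ) (φ : ℝ),
        (∀ l : L, 0 ≤ ψp l) → (∀ l : L, 0 ≤ ψm l) →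
        (∀ a ∈ 𝒜, ∑ l : L, (ψp l - ψm l) * (1 - a l) + φ ≥ H a) →
        ∑ l : L, ψps l * μ l + φs ≤ ∑ l : L, ψp l * μ l + φ) := by
  set c : 𝒜 → ℝ := H ∘ Subtype.val
  have hobj (q : (L → ℝ) → ℝ) : ∑ a ∈ 𝒜, q a * H a = (q ∘ Subtype.val) ⬝ᵥ c :=
    (sum_coe_sort 𝒜 fun a => q a * H a).symm
  obtain ⟨q₀, hq₀⟩ := hne
  obtain ⟨x, hx, hmax⟩ := exists_isMaxOn_momentPolytope c
    ⟨_, comp_val_mem_momentPolytope_failureMatrix_iff.2 hq₀⟩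
  obtain ⟨y, φ, hy, hyc, hval⟩ := exists_dual_eq_of_isMaxOn c hx hmax
  set qs := Function.extend Subtype.val x 0
  have hqs : qs ∘ Subtype.val = x := Function.extend_comp Subtype.val_injective x 0
  have h𝒜 : ∀ a ∈ 𝒜, ∀ l, a l ≤ 1 := fun a ha l => by rcases hbin a ha l with h | h <;> simp [h]
  refine ⟨qs, y, 0, φ, comp_val_mem_momentPolytope_failureMatrix_iff.1 (hqs ▸ hx),
    ⟨hy, fun _ => le_rfl, fun a ha => ?_⟩, by rw [hobj, hqs, ← hval]; rfl,
    fun q h0 h1 hμ => ?_, fun ψp ψm φ' hψp hψm hψ => ?_⟩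
  · simpa [c, failureMatrix_mulVec_apply] using hyc ⟨a, ha⟩
  · rw [hobj, hobj, hqs]
    exact hmax (comp_val_mem_momentPolytope_failureMatrix_iff.2 ⟨h0, h1, hμ⟩)
  · exact hval.trans_le (dotProduct_le_of_mem_momentPolytope c hx hψp
      (le_failureMatrix_mulVec_add h𝒜 hψm hψ))

/-- Strong duality for the decision-dependent distributionally robust second level:
if the ambiguity set `P(μ)` is nonempty, then there exist a primal optimal pmf `q*`
and a dual feasible point `(ψp*, ψm*, φ*)` with equal objective values, where `q*`
maximizes the expected recourse cost over `P(μ)` and `(ψp*, ψm*, φ*)` minimizes the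
dual objective over all dual feasible points. -/
theorem strong_duality_ddu_second_level
    {L : Type*} [Fintype L] [Nonempty L]
    (𝒜 : Finset (L → ℝ)) (h𝒜 : 𝒜.Nonempty)
    (hbin : ∀ a ∈ 𝒜, ∀ l : L, a l = 0 ∨ a l = 1)
    (μ : L → ℝ) (H : (L → ℝ) → ℝ)
    -- the ambiguity set P(μ) is nonempty
    (hne : ∃ q : (L → ℝ) → ℝ,
      (∀ a ∈ 𝒜, 0 ≤ q a) ∧ (∑ a ∈ 𝒜, q a = 1) ∧
      (∀ l : L, ∑ a ∈ 𝒜, q a * (1 - a l) ≤ μ l)) :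
    ∃ (qs : (L → ℝ) → ℝ) (ψps ψms : L → ℝ) (φs : ℝ),
      -- qs ∈ P(μ)
      ((∀ a ∈ 𝒜, 0 ≤ qs a) ∧ (∑ a ∈ 𝒜, qs a = 1) ∧
        (∀ l : L, ∑ a ∈ 𝒜, qs a * (1 - a l) ≤ μ l)) ∧
      -- (ψps, ψms, φs) is dual feasible
      ((∀ l : L, 0 ≤ ψps l) ∧ (∀ l : L, 0 ≤ ψms l) ∧
        (∀ a ∈ 𝒜, ∑ l : L, (ψps l - ψms l) * (1 - a l) + φs ≥ H a)) ∧
      -- equal objective values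
      (∑ a ∈ 𝒜, qs a * H a = ∑ l : L, ψps l * μ l + φs) ∧
      -- qs is primal optimal
      (∀ q : (L → ℝ) → ℝ,
        (∀ a ∈ 𝒜, 0 ≤ q a) → (∑ a ∈ 𝒜, q a = 1) →
        (∀ l : L, ∑ a ∈ 𝒜, q a * (1 - a l) ≤ μ l) →
        ∑ a ∈ 𝒜, q a * H a ≤ ∑ a ∈ 𝒜, qs a * H a) ∧
      -- (ψps, ψms, φs) is dual optimal
      (∀ (ψp ψm : L → ℝ) (φ : ℝ),
        (∀ l : L, 0 ≤ ψp l) → (∀ l : L, 0 ≤ ψm l) →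
        (∀ a ∈ 𝒜, ∑ l : L, (ψp l - ψm l) * (1 - a l) + φ ≥ H a) →
        ∑ l : L, ψps l * μ l + φs ≤ ∑ l : L, ψp l * μ l + φ) :=
  strong_duality_ddu_second_level_general 𝒜 hbin μ H hne
end

section
/- Monotonicity of the worst-case expected cost in the power-flow magnitudes: suppose the no-failure scenario a₀ (a₀ l = 1 for all l) belongs to 𝒜, and that γ l ≥ 0, β l ≥ 0 and wβ l (y) ≥ 0 for all l ∈ L. If |f l| ≤ |f' l| for every l ∈ L, then the maximum of Σ_{a∈𝒜} q a · H a over q ∈ P(μ̄(f, y)) is at most the maximum of Σ_{a∈𝒜} q a · H a over q ∈ P(μ̄(f', y)) (both maxima being attained over nonempty compact feasible sets). -/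
/-!
The worst-case expected cost is the maximum of a linear functional over the ambiguity set, which
is a compact polytope once pmfs are read as vectors indexed by `𝒜`; it is nonempty because the
point mass at the no-failure scenario has zero failure moments. Since `γ + β wβ |f|` is monotone
in `|f|`, the ambiguity set only grows from `f` to `f'`, so the maximum cannot decrease.
-/

section

variable {L : Type*}

/-- The ambiguity set `P(μ)`; values of `q` outside `𝒜` are unconstrained. -/
def ambiguitySet (𝒜 : Finset (L → ℝ)) (μ : L → ℝ) : Set ((L → ℝ) → ℝ) :=
  {q | (∀ a ∈ 𝒜, 0 ≤ q a) ∧ ∑ a ∈ 𝒜, q a = 1 ∧ ∀ l, ∑ a ∈ 𝒜, q a * (1 - a l) ≤ μ l}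

def ambiguitySimplex (𝒜 : Finset (L → ℝ)) (μ : L → ℝ) : Set (𝒜 → ℝ) :=
  stdSimplex ℝ 𝒜 ∩ {p | ∀ l, ∑ a : 𝒜, p a * (1 - (a : L → ℝ) l) ≤ μ l}

variable {𝒜 : Finset (L → ℝ)} {μ ν : L → ℝ}

theorem ambiguitySet_mono (h : μ ≤ ν) : ambiguitySet 𝒜 μ ⊆ ambiguitySet 𝒜 ν :=
  fun _ ⟨hq₀, hq₁, hqμ⟩ => ⟨hq₀, hq₁, fun l => (hqμ l).trans (h l)⟩

theorem single_mem_ambiguitySet [DecidableEq (L → ℝ)] {a₀ : L → ℝ} (ha₀ : a₀ ∈ 𝒜)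
    (hμ : ∀ l, 1 - a₀ l ≤ μ l) :
    Pi.single a₀ 1 ∈ ambiguitySet 𝒜 μ := by
  refine ⟨fun a _ => ?_, ?_, fun l => ?_⟩
  · by_cases h : a = a₀ <;> simp [h]
  · simp [Finset.sum_pi_single', ha₀]
  · rw [Finset.sum_eq_single a₀ (fun a _ h => by simp [h]) (fun h => absurd ha₀ h)]
    simpa using hμ l

theorem sum_restrict_mul (q g : (L → ℝ) → ℝ) :
    ∑ a : 𝒜, Subtype.restrict (· ∈ 𝒜) q a * g a = ∑ a ∈ 𝒜, q a * g a :=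
  Finset.sum_coe_sort 𝒜 fun a => q a * g a

theorem ambiguitySet_eq_preimage :
    ambiguitySet 𝒜 μ = Subtype.restrict (· ∈ 𝒜) ⁻¹' ambiguitySimplex 𝒜 μ := by
  ext q
  refine .trans (and_congr (Finset.forall_coe 𝒜 fun a => 0 ≤ q a).symm
    (and_congr ?_ (forall_congr' fun l => ?_))) and_assoc.symm
  · exact (Finset.sum_coe_sort 𝒜 q).symm ▸ Iff.rfl
  · exact (sum_restrict_mul q fun a => 1 - a l).symm ▸ Iff.rfl

theorem isCompact_ambiguitySimplex : IsCompact (ambiguitySimplex 𝒜 μ) := by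
  refine (isCompact_stdSimplex ℝ 𝒜).inter_right ?_
  simp only [Set.ofPred_forall]
  exact isClosed_iInter fun l => isClosed_le (by fun_prop) continuous_const

theorem exists_isMaxOn_ambiguitySet (hne : (ambiguitySet 𝒜 μ).Nonempty) (H : (L → ℝ) → ℝ) :
    ∃ q ∈ ambiguitySet 𝒜 μ, IsMaxOn (fun q => ∑ a ∈ 𝒜, q a * H a) (ambiguitySet 𝒜 μ) q := by
  rw [ambiguitySet_eq_preimage] at hne ⊢
  obtain ⟨p, hp, hmax⟩ := isCompact_ambiguitySimplex.exists_isMaxOn 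
    (Set.nonempty_of_nonempty_preimage hne)
    (Continuous.continuousOn (f := fun p : 𝒜 → ℝ => ∑ a : 𝒜, p a * H a) (by fun_prop))
  obtain ⟨q, rfl⟩ := Subtype.surjective_restrict (β := fun _ => ℝ) (· ∈ 𝒜) p
  refine ⟨q, hp, ?_⟩
  simpa only [Function.comp_def, sum_restrict_mul] using
    hmax.comp_mapsTo (Set.mapsTo_preimage _ _) rfl

end

theorem worst_case_cost_monotone_in_flow_general
    {L : Type*}
    (𝒜 : Finset (L → ℝ))
    (ha₀ : (fun _ : L => (1 : ℝ)) ∈ 𝒜)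
    (H : (L → ℝ) → ℝ)
    (γ β wβ : L → ℝ)
    (hγ : ∀ l : L, 0 ≤ γ l) (hβ : ∀ l : L, 0 ≤ β l) (hwβ : ∀ l : L, 0 ≤ wβ l)
    (f f' : L → ℝ) (hf : ∀ l : L, |f l| ≤ |f' l|) :
    ∃ q₁ q₂ : (L → ℝ) → ℝ,
      -- q₁ ∈ P(μ̄(f, y))
      ((∀ a ∈ 𝒜, 0 ≤ q₁ a) ∧ (∑ a ∈ 𝒜, q₁ a = 1) ∧
        (∀ l : L, ∑ a ∈ 𝒜, q₁ a * (1 - a l) ≤ γ l + β l * wβ l * |f l|)) ∧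
      -- q₂ ∈ P(μ̄(f', y))
      ((∀ a ∈ 𝒜, 0 ≤ q₂ a) ∧ (∑ a ∈ 𝒜, q₂ a = 1) ∧
        (∀ l : L, ∑ a ∈ 𝒜, q₂ a * (1 - a l) ≤ γ l + β l * wβ l * |f' l|)) ∧
      -- q₁ attains the maximum over P(μ̄(f, y))
      (∀ q : (L → ℝ) → ℝ,
        (∀ a ∈ 𝒜, 0 ≤ q a) → (∑ a ∈ 𝒜, q a = 1) →
        (∀ l : L, ∑ a ∈ 𝒜, q a * (1 - a l) ≤ γ l + β l * wβ l * |f l|) →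
        ∑ a ∈ 𝒜, q a * H a ≤ ∑ a ∈ 𝒜, q₁ a * H a) ∧
      -- q₂ attains the maximum over P(μ̄(f', y))
      (∀ q : (L → ℝ) → ℝ,
        (∀ a ∈ 𝒜, 0 ≤ q a) → (∑ a ∈ 𝒜, q a = 1) →
        (∀ l : L, ∑ a ∈ 𝒜, q a * (1 - a l) ≤ γ l + β l * wβ l * |f' l|) →
        ∑ a ∈ 𝒜, q a * H a ≤ ∑ a ∈ 𝒜, q₂ a * H a) ∧
      -- the maxima are ordered
      ∑ a ∈ 𝒜, q₁ a * H a ≤ ∑ a ∈ 𝒜, q₂ a * H a := by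
  classical
  have hβwβ : ∀ l, 0 ≤ β l * wβ l := fun l => mul_nonneg (hβ l) (hwβ l)
  have hμ : ∀ l, 1 - (1 : ℝ) ≤ γ l + β l * wβ l * |f l| := fun l =>
    sub_self (1 : ℝ) ▸ add_nonneg (hγ l) (mul_nonneg (hβwβ l) (abs_nonneg _))
  have hmono : (fun l => γ l + β l * wβ l * |f l|) ≤ fun l => γ l + β l * wβ l * |f' l| :=
    fun l => add_le_add_right (mul_le_mul_of_nonneg_left (hf l) (hβwβ l)) _
  obtain ⟨q₁, hq₁, hmax₁⟩ := exists_isMaxOn_ambiguitySet ⟨_, single_mem_ambiguitySet ha₀ hμ⟩ H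
  obtain ⟨q₂, hq₂, hmax₂⟩ := exists_isMaxOn_ambiguitySet ⟨q₁, ambiguitySet_mono hmono hq₁⟩ H
  exact ⟨q₁, q₂, hq₁, hq₂, fun q h₀ h₁ hμ => hmax₁ ⟨h₀, h₁, hμ⟩,
    fun q h₀ h₁ hμ => hmax₂ ⟨h₀, h₁, hμ⟩, hmax₂ (ambiguitySet_mono hmono hq₁)⟩

/-- Monotonicity of the worst-case expected cost in the power-flow magnitudes:
if the no-failure scenario belongs to `𝒜`, `γ, β, wβ ≥ 0`, and `|f l| ≤ |f' l|`
for every line `l`, then the (attained) maximum of the expected recourse cost over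
`P(μ̄(f, y))` is at most the (attained) maximum over `P(μ̄(f', y))`. -/
theorem worst_case_cost_monotone_in_flow
    {L : Type*} [Fintype L] [Nonempty L]
    (𝒜 : Finset (L → ℝ)) (h𝒜 : 𝒜.Nonempty)
    (hbin : ∀ a ∈ 𝒜, ∀ l : L, a l = 0 ∨ a l = 1)
    (ha₀ : (fun _ : L => (1 : ℝ)) ∈ 𝒜)
    (H : (L → ℝ) → ℝ)
    (γ β wβ : L → ℝ)
    (hγ : ∀ l : L, 0 ≤ γ l) (hβ : ∀ l : L, 0 ≤ β l) (hwβ : ∀ l : L, 0 ≤ wβ l)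
    (f f' : L → ℝ) (hf : ∀ l : L, |f l| ≤ |f' l|) :
    ∃ q₁ q₂ : (L → ℝ) → ℝ,
      -- q₁ ∈ P(μ̄(f, y))
      ((∀ a ∈ 𝒜, 0 ≤ q₁ a) ∧ (∑ a ∈ 𝒜, q₁ a = 1) ∧
        (∀ l : L, ∑ a ∈ 𝒜, q₁ a * (1 - a l) ≤ γ l + β l * wβ l * |f l|)) ∧
      -- q₂ ∈ P(μ̄(f', y))
      ((∀ a ∈ 𝒜, 0 ≤ q₂ a) ∧ (∑ a ∈ 𝒜, q₂ a = 1) ∧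
        (∀ l : L, ∑ a ∈ 𝒜, q₂ a * (1 - a l) ≤ γ l + β l * wβ l * |f' l|)) ∧
      -- q₁ attains the maximum over P(μ̄(f, y))
      (∀ q : (L → ℝ) → ℝ,
        (∀ a ∈ 𝒜, 0 ≤ q a) → (∑ a ∈ 𝒜, q a = 1) →
        (∀ l : L, ∑ a ∈ 𝒜, q a * (1 - a l) ≤ γ l + β l * wβ l * |f l|) →
        ∑ a ∈ 𝒜, q a * H a ≤ ∑ a ∈ 𝒜, q₁ a * H a) ∧
      -- q₂ attains the maximum over P(μ̄(f', y))
      (∀ q : (L → ℝ) → ℝ,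
        (∀ a ∈ 𝒜, 0 ≤ q a) → (∑ a ∈ 𝒜, q a = 1) →
        (∀ l : L, ∑ a ∈ 𝒜, q a * (1 - a l) ≤ γ l + β l * wβ l * |f' l|) →
        ∑ a ∈ 𝒜, q a * H a ≤ ∑ a ∈ 𝒜, q₂ a * H a) ∧
      -- the maxima are ordered
      ∑ a ∈ 𝒜, q₁ a * H a ≤ ∑ a ∈ 𝒜, q₂ a * H a :=
  worst_case_cost_monotone_in_flow_general 𝒜 ha₀ H γ β wβ hγ hβ hwβ f f' hf
end

section
/- Hardening does not increase the worst-case expected cost: suppose the no-failure scenario a₀ (a₀ l = 1 for all l) belongs to 𝒜, that γ l ≥ 0 and β l ≥ 0 for all l ∈ L, that 0 ≤ wha l h ≤ 1 for all l and h, and that the hardening decisions y l h take values in {0,1} with Σ_h y l h ≤ 1 for each l. Then the maximum of Σ_{a∈𝒜} q a · H a over q ∈ P(μ̄(f, y)) is at most the maximum of Σ_{a∈𝒜} q a · H a over q ∈ P(μ̄(f, y₀)), where y₀ = 0 is the no-hardening decision. -/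
lemma exists_max_on_closed_simplex {ι : Type*} [Fintype ι]
    (S : Set (ι → ℝ)) (hne : S.Nonempty)
    (hsub : ∀ p ∈ S, (∀ i, 0 ≤ p i) ∧ ∑ i, p i = 1)
    (hclosed : IsClosed S) (g : ι → ℝ) :
    ∃ p ∈ S, ∀ q ∈ S, ∑ i, q i * g i ≤ ∑ i, p i * g i := by
  have hbdd : S ⊆ Set.pi Set.univ (fun _ : ι => Set.Icc (0:ℝ) 1) := by
    intro p hp i _
    obtain ⟨hpos, hsum⟩ := hsub p hp
    refine ⟨hpos i, ?_⟩
    calc p i ≤ ∑ j, p j := Finset.single_le_sum (fun j _ => hpos j) (Finset.mem_univ i)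
    _ = 1 := hsum
  have hcompact : IsCompact S :=
    (isCompact_univ_pi (fun _ => isCompact_Icc)).of_isClosed_subset hclosed hbdd
  have hcont : Continuous (fun p : ι → ℝ => ∑ i, p i * g i) :=
    continuous_finset_sum _ (fun i _ => (continuous_apply i).mul continuous_const)
  obtain ⟨p, hp, hmax⟩ := hcompact.exists_isMaxOn hne hcont.continuousOn
  exact ⟨p, hp, fun q hq => hmax hq⟩

lemma exists_worst_case_pmf {L : Type*} [Fintype L]
    (𝒜 : Finset (L → ℝ)) (ha₀ : (fun _ : L => (1 : ℝ)) ∈ 𝒜)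
    (H : (L → ℝ) → ℝ) (μ : L → ℝ) (hμ : ∀ l, 0 ≤ μ l) :
    ∃ q : (L → ℝ) → ℝ, (∀ a ∈ 𝒜, 0 ≤ q a) ∧ (∑ a ∈ 𝒜, q a = 1) ∧
      (∀ l, ∑ a ∈ 𝒜, q a * (1 - a l) ≤ μ l) ∧
      (∀ q' : (L → ℝ) → ℝ, (∀ a ∈ 𝒜, 0 ≤ q' a) → (∑ a ∈ 𝒜, q' a = 1) →
        (∀ l, ∑ a ∈ 𝒜, q' a * (1 - a l) ≤ μ l) →
        ∑ a ∈ 𝒜, q' a * H a ≤ ∑ a ∈ 𝒜, q a * H a) := by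
  classical
  set S : Set ({a // a ∈ 𝒜} → ℝ) :=
    {p | (∀ a, 0 ≤ p a) ∧ (∑ a, p a = 1) ∧
      ∀ l, ∑ a, p a * (1 - (a : L → ℝ) l) ≤ μ l} with hS
  have hne : S.Nonempty := by
    refine ⟨fun a => if a = ⟨fun _ => 1, ha₀⟩ then 1 else 0, ?_, ?_, ?_⟩
    · intro a; dsimp only; split <;> norm_num
    · simp
    · intro l
      have : ∀ a : {a // a ∈ 𝒜},
          (if a = ⟨fun _ => 1, ha₀⟩ then (1:ℝ) else 0) * (1 - (a : L → ℝ) l)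
          = if a = ⟨fun _ => 1, ha₀⟩ then (1 - (a : L → ℝ) l) else 0 := by
        intro a; split <;> simp
      rw [Finset.sum_congr rfl (fun a _ => this a), Finset.sum_ite_eq' Finset.univ]
      simpa using hμ l
  have hclosed : IsClosed S := by
    have h1 : IsClosed {p : {a // a ∈ 𝒜} → ℝ | ∀ a, 0 ≤ p a} := by
      rw [Set.setOf_forall]
      exact isClosed_iInter fun a => isClosed_le continuous_const (continuous_apply a)
    have h2 : IsClosed {p : {a // a ∈ 𝒜} → ℝ | ∑ a, p a = 1} :=
      isClosed_eq (continuous_finset_sum _ (fun a _ => continuous_apply a)) continuous_const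
    have h3 : IsClosed {p : {a // a ∈ 𝒜} → ℝ |
        ∀ l, ∑ a, p a * (1 - (a : L → ℝ) l) ≤ μ l} := by
      rw [Set.setOf_forall]
      exact isClosed_iInter fun l => isClosed_le
        (continuous_finset_sum _ (fun a _ => (continuous_apply a).mul continuous_const))
        continuous_const
    exact h1.inter (h2.inter h3)
  obtain ⟨p, hpS, hpmax⟩ := exists_max_on_closed_simplex S hne
    (fun p hp => ⟨hp.1, hp.2.1⟩) hclosed (fun a => H a.1)
  obtain ⟨hp0, hp1, hpμ⟩ := hpS
  have hconv : ∀ g : (L → ℝ) → ℝ,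
      ∑ a ∈ 𝒜, (if h : a ∈ 𝒜 then p ⟨a, h⟩ else 0) * g a
      = ∑ a : {x // x ∈ 𝒜}, p a * g a := by
    intro g
    rw [← Finset.sum_coe_sort 𝒜 (fun a => (if h : a ∈ 𝒜 then p ⟨a, h⟩ else 0) * g a)]
    exact Finset.sum_congr rfl (fun a _ => by rw [dif_pos a.2])
  refine ⟨fun a => if h : a ∈ 𝒜 then p ⟨a, h⟩ else 0, ?_, ?_, ?_, ?_⟩
  · intro a ha; simp only [dif_pos ha]; exact hp0 _
  · have := hconv (fun _ => 1); simpa using this.trans (by simpa using hp1)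
  · intro l; exact (hconv (fun a => 1 - a l)).le.trans (hpμ l)
  · intro q' hq'0 hq'1 hq'μ
    rw [hconv H]
    have hrestr : (fun a : {x // x ∈ 𝒜} => q' a) ∈ S := by
      refine ⟨fun a => hq'0 _ a.2, ?_, ?_⟩
      · rw [Finset.sum_coe_sort 𝒜 q']; exact hq'1
      · intro l
        rw [Finset.sum_coe_sort 𝒜 (fun a => q' a * (1 - a l))]
        exact hq'μ l
    have := hpmax _ hrestr
    calc ∑ a ∈ 𝒜, q' a * H a
        = ∑ a : {x // x ∈ 𝒜}, q' a * H a :=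
          (Finset.sum_coe_sort 𝒜 (fun a => q' a * H a)).symm
      _ ≤ ∑ a : {x // x ∈ 𝒜}, p a * H a := this

/-- Hardening does not increase the worst-case expected cost: with the no-failure
scenario in `𝒜`, `γ, β ≥ 0`, hardening weights `wha l h ∈ [0,1]`, and binary
hardening decisions `y l h ∈ {0,1}` with `∑ h, y l h ≤ 1` per line, the (attained)
maximum of the expected recourse cost over `P(μ̄(f, y))` is at most the (attained)
maximum over `P(μ̄(f, y₀))` for the no-hardening decision `y₀ = 0`, where the
hardening factor is `wβ l (y) = 1 - ∑ h, wha l h * y l h`. -/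
theorem hardening_does_not_increase_worst_case_cost
    {L : Type*} [Fintype L] [Nonempty L]
    {Hopt : Type*} [Fintype Hopt]
    (𝒜 : Finset (L → ℝ)) (h𝒜 : 𝒜.Nonempty)
    (hbin : ∀ a ∈ 𝒜, ∀ l : L, a l = 0 ∨ a l = 1)
    (ha₀ : (fun _ : L => (1 : ℝ)) ∈ 𝒜)
    (H : (L → ℝ) → ℝ)
    (γ β f : L → ℝ)
    (hγ : ∀ l : L, 0 ≤ γ l) (hβ : ∀ l : L, 0 ≤ β l)
    (wha : L → Hopt → ℝ) (hwha : ∀ l : L, ∀ h : Hopt, 0 ≤ wha l h ∧ wha l h ≤ 1)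
    (y : L → Hopt → ℝ)
    (hy : ∀ l : L, ∀ h : Hopt, y l h = 0 ∨ y l h = 1)
    (hysum : ∀ l : L, ∑ h : Hopt, y l h ≤ 1) :
    ∃ q₁ q₂ : (L → ℝ) → ℝ,
      -- q₁ ∈ P(μ̄(f, y))
      ((∀ a ∈ 𝒜, 0 ≤ q₁ a) ∧ (∑ a ∈ 𝒜, q₁ a = 1) ∧
        (∀ l : L, ∑ a ∈ 𝒜, q₁ a * (1 - a l) ≤
          γ l + β l * (1 - ∑ h : Hopt, wha l h * y l h) * |f l|)) ∧
      -- q₂ ∈ P(μ̄(f, y₀)) with y₀ = 0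
      ((∀ a ∈ 𝒜, 0 ≤ q₂ a) ∧ (∑ a ∈ 𝒜, q₂ a = 1) ∧
        (∀ l : L, ∑ a ∈ 𝒜, q₂ a * (1 - a l) ≤
          γ l + β l * (1 - ∑ h : Hopt, wha l h * (0 : ℝ)) * |f l|)) ∧
      -- q₁ attains the maximum over P(μ̄(f, y))
      (∀ q : (L → ℝ) → ℝ,
        (∀ a ∈ 𝒜, 0 ≤ q a) → (∑ a ∈ 𝒜, q a = 1) →
        (∀ l : L, ∑ a ∈ 𝒜, q a * (1 - a l) ≤
          γ l + β l * (1 - ∑ h : Hopt, wha l h * y l h) * |f l|) →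
        ∑ a ∈ 𝒜, q a * H a ≤ ∑ a ∈ 𝒜, q₁ a * H a) ∧
      -- q₂ attains the maximum over P(μ̄(f, y₀))
      (∀ q : (L → ℝ) → ℝ,
        (∀ a ∈ 𝒜, 0 ≤ q a) → (∑ a ∈ 𝒜, q a = 1) →
        (∀ l : L, ∑ a ∈ 𝒜, q a * (1 - a l) ≤
          γ l + β l * (1 - ∑ h : Hopt, wha l h * (0 : ℝ)) * |f l|) →
        ∑ a ∈ 𝒜, q a * H a ≤ ∑ a ∈ 𝒜, q₂ a * H a) ∧
      -- hardening does not increase the worst-case expected cost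
      ∑ a ∈ 𝒜, q₁ a * H a ≤ ∑ a ∈ 𝒜, q₂ a * H a := by
  have hy0 : ∀ l h, 0 ≤ y l h := fun l h => by rcases hy l h with h' | h' <;> simp [h']
  have hwy0 : ∀ l, 0 ≤ ∑ h : Hopt, wha l h * y l h :=
    fun l => Finset.sum_nonneg fun h _ => mul_nonneg (hwha l h).1 (hy0 l h)
  have hwy1 : ∀ l, ∑ h : Hopt, wha l h * y l h ≤ 1 := by
    intro l
    calc ∑ h : Hopt, wha l h * y l h ≤ ∑ h : Hopt, y l h :=
          Finset.sum_le_sum fun h _ => by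
            have := mul_le_mul_of_nonneg_right (hwha l h).2 (hy0 l h)
            simpa using this
      _ ≤ 1 := hysum l
  set μ₁ : L → ℝ := fun l => γ l + β l * (1 - ∑ h : Hopt, wha l h * y l h) * |f l| with hμ₁
  set μ₂ : L → ℝ := fun l => γ l + β l * (1 - ∑ h : Hopt, wha l h * (0:ℝ)) * |f l| with hμ₂
  have hμ₁0 : ∀ l, 0 ≤ μ₁ l := fun l =>
    add_nonneg (hγ l) (mul_nonneg (mul_nonneg (hβ l) (by linarith [hwy1 l])) (abs_nonneg _))
  have hμ₂0 : ∀ l, 0 ≤ μ₂ l := fun l => by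
    simp only [hμ₂, mul_zero, Finset.sum_const_zero, sub_zero]
    exact add_nonneg (hγ l) (mul_nonneg (by simpa using hβ l) (abs_nonneg _))
  have hle : ∀ l, μ₁ l ≤ μ₂ l := by
    intro l
    simp only [hμ₁, hμ₂, mul_zero, Finset.sum_const_zero, sub_zero]
    have : β l * (1 - ∑ h : Hopt, wha l h * y l h) * |f l| ≤ β l * 1 * |f l| := by
      apply mul_le_mul_of_nonneg_right _ (abs_nonneg _)
      exact mul_le_mul_of_nonneg_left (by linarith [hwy0 l]) (hβ l)
    linarith
  obtain ⟨q₁, hq₁0, hq₁1, hq₁μ, hq₁max⟩ := exists_worst_case_pmf 𝒜 ha₀ H μ₁ hμ₁0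
  obtain ⟨q₂, hq₂0, hq₂1, hq₂μ, hq₂max⟩ := exists_worst_case_pmf 𝒜 ha₀ H μ₂ hμ₂0
  exact ⟨q₁, q₂, ⟨hq₁0, hq₁1, hq₁μ⟩, ⟨hq₂0, hq₂1, hq₂μ⟩, hq₁max, hq₂max,
    hq₂max q₁ hq₁0 hq₁1 (fun l => (hq₁μ l).trans (hle l))⟩
end
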